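/- Let Λ be a finite dimensional algebra with an n-cluster tilting object M in mod Λ. Then gl.dim Λ = id M_Λ (the injective dimension of M as a right Λ-module). Moreover, every indecomposable direct summand X of M is either projective or satisfies pd X_Λ ≥ n. -/

import Mathlib

noncomputable section

open CategoryTheory ModuleCat Limits Opposite

universe u

variable (k : Type u) [Field k] (A : Type u) [Ring A] [Algebra k A]

/-- The Ext group `Ext_A^n(X, Y)` of (left) `A`-modules, as a `k`-module. -/
def extGrp (n : ℕ) (X Y : ModuleCat.{u} A) : ModuleCat.{u} k :=
  ((Ext k (ModuleCat.{u} A) n).obj (op X)).obj Y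

/-- Vanishing of `Ext^n_A(X,Y)`. -/
def extZero (n : ℕ) (X Y : ModuleCat.{u} A) : Prop :=
  Subsingleton (extGrp k A n X Y)

/-- The global dimension of `A` is at most `d`. -/
def gldimLE (d : ℕ) : Prop :=
  ∀ i : ℕ, d < i → ∀ X Y : ModuleCat.{u} A, extZero k A i X Y

/-- The projective dimension of `X` is at most `d`. -/
def pdLE (X : ModuleCat.{u} A) (d : ℕ) : Prop :=
  ∀ i : ℕ, d < i → ∀ Y : ModuleCat.{u} A, extZero k A i X Y

/-- The injective dimension of `X` is at most `d`. -/
def idLE (X : ModuleCat.{u} A) (d : ℕ) : Prop :=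
  ∀ i : ℕ, d < i → ∀ Y : ModuleCat.{u} A, extZero k A i Y X

/-- `X` belongs to the additive closure `add S` of the class of modules `S`. -/
def InAdd (S : Set (ModuleCat.{u} A)) (X : ModuleCat.{u} A) : Prop :=
  ∃ (Y : ModuleCat.{u} A) (m : ℕ) (f : Fin m → ModuleCat.{u} A),
    (∀ i, f i ∈ S) ∧ Nonempty ((X ⊞ Y) ≅ ⨁ f)

/-- `X` is a direct summand of `M`. -/
def IsSummand (X M : ModuleCat.{u} A) : Prop :=
  ∃ Y : ModuleCat.{u} A, Nonempty (M ≅ X ⊞ Y)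

/-- `X` is an indecomposable (in particular nonzero) module. -/
def Indec (X : ModuleCat.{u} A) : Prop :=
  ¬ IsZero X ∧ ∀ Y Z : ModuleCat.{u} A, Nonempty (X ≅ Y ⊞ Z) → IsZero Y ∨ IsZero Z

/-- `C` is an `n`-cluster tilting subcategory of the category `mod A` of finitely
generated `A`-modules: it consists of finitely generated modules, it is functorially
finite in `mod A`, and it coincides with both `Ext`-perpendicular classes. -/
def IsNCT (n : ℕ) (C : Set (ModuleCat.{u} A)) : Prop :=
  (∀ X ∈ C, Module.Finite A X) ∧
  (∀ X : ModuleCat.{u} A, Module.Finite A X →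
    ∃ C₀ ∈ C, ∃ f : C₀ ⟶ X, ∀ C₁ ∈ C, ∀ g : C₁ ⟶ X, ∃ h : C₁ ⟶ C₀, h ≫ f = g) ∧
  (∀ X : ModuleCat.{u} A, Module.Finite A X →
    ∃ C₀ ∈ C, ∃ f : X ⟶ C₀, ∀ C₁ ∈ C, ∀ g : X ⟶ C₁, ∃ h : C₀ ⟶ C₁, f ≫ h = g) ∧
  (∀ X : ModuleCat.{u} A, X ∈ C ↔
    (Module.Finite A X ∧ ∀ i : ℕ, 0 < i → i < n → ∀ Y ∈ C, extZero k A i X Y)) ∧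
  (∀ X : ModuleCat.{u} A, X ∈ C ↔
    (Module.Finite A X ∧ ∀ i : ℕ, 0 < i → i < n → ∀ Y ∈ C, extZero k A i Y X))

/-- `M` is an `n`-cluster tilting object of `mod A`. -/
def IsNCTObject (n : ℕ) (M : ModuleCat.{u} A) : Prop :=
  Module.Finite A M ∧ IsNCT k A n {X | InAdd A {M} X}

/-!
For a projective resolution `P` of `X`, `Ext^{j+1}(X, Y) = 0` iff every cocycle `P_{j+1} ⟶ Y` is a
coboundary; the parts of the long exact `Ext` sequences that are used are diagram chases with this
criterion.

Let `C = add M` and suppose `id M ≤ d`. For finitely generated `Y`, a right `C`-approximation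
gives `0 → K → C₀ → Y → 0` with `C₀ ∈ C`, and `K` has one more vanishing `Ext^i(C, -)`, `0 < i < n`,
than `Y`. After `n - 1` such steps one reaches `C` itself, where `id ≤ d`, and `id ≤ d` travels back
along the sequences. Over the noetherian algebra `A`, projective dimension of finitely generated
modules is detected by finitely generated modules, and injective dimension by finitely generated
modules as well (Baer's criterion and dimension shifting), so `gl.dim A ≤ d`.

A summand `X` of `M` has `Ext^i(X, Q) = 0` for `0 < i < n` and every finitely generated projective
`Q`, as `Q ∈ C`; so if `pd X < n` the syzygies of `X` split one after another and `X` is projective.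
-/

namespace CategoryTheory.ProjectiveResolution

variable {C : Type*} [Category C] [Abelian C]

section Augmentation

variable {Z : C} (P : ProjectiveResolution Z)

/-- `P.π.f 0`, retyped: its target `((single₀ C).obj Z).X 0` is `Z` only up to unfolding, which
defeats rewriting. -/
def augmentation : P.complex.X 0 ⟶ Z :=
  (ChainComplex.toSingle₀Equiv _ _ P.π).1

@[simp]
theorem d_comp_augmentation : P.complex.d 1 0 ≫ P.augmentation = 0 :=
  (ChainComplex.toSingle₀Equiv _ _ P.π).2

@[simp]
theorem d_comp_augmentation_assoc {W : C} (g : Z ⟶ W) :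
    P.complex.d 1 0 ≫ P.augmentation ≫ g = 0 := by
  rw [← Category.assoc, d_comp_augmentation, zero_comp]

instance : Epi P.augmentation :=
  inferInstanceAs (Epi (P.π.f 0))

theorem exact_augmentation : (ShortComplex.mk _ _ P.d_comp_augmentation).Exact :=
  P.exact₀

end Augmentation

/-- The resolution `⋯ → P₁ → P₀ → S.X₂` of `S.X₃` spliced from a resolution `P` of `S.X₁`. -/
def ofShortExact {S : ShortComplex C} (hS : S.ShortExact) [Projective S.X₂]
    (P : ProjectiveResolution S.X₁) : ProjectiveResolution S.X₃ :=
  let K := P.complex.augment (P.augmentation ≫ S.f) (by simp)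
  have wg : K.d 1 0 ≫ S.g = 0 :=
    (Category.assoc _ _ _).trans ((P.augmentation ≫= S.zero).trans comp_zero)
  { complex := K
    projective
      | 0 => (inferInstance : Projective S.X₂)
      | n + 1 => (inferInstance : Projective (P.complex.X n))
    π := (ChainComplex.toSingle₀Equiv _ _).symm ⟨S.g, wg⟩
    quasiIso := ⟨fun n => by
      match n with
      | 0 =>
        have := hS.epi_g
        rw [ChainComplex.quasiIsoAt₀_iff, ShortComplex.quasiIso_iff_of_zeros' _ rfl rfl rfl]
        refine (ShortComplex.exact_and_epi_g_iff_of_iso ?_).2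
          ⟨(ShortComplex.exact_iff_of_epi_of_isIso_of_mono
            (S₁ := ShortComplex.mk (P.augmentation ≫ S.f) S.g (by simp))
            ⟨P.augmentation, 𝟙 _, 𝟙 _, by simp, by simp⟩).2 hS.exact, hS.epi_g⟩
        exact ShortComplex.isoMk (Iso.refl _) (Iso.refl _) (Iso.refl _)
          ((Category.id_comp _).trans (Category.comp_id _).symm)
          ((Category.id_comp _).trans
            ((ChainComplex.toSingle₀Equiv_symm_apply_f_zero (C := K) S.g wg).symm.trans
              (Category.comp_id _).symm))
      | 1 =>
        rw [quasiIsoAt_iff_exactAt' _ _ (ChainComplex.exactAt_succ_single_obj _ _),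
          HomologicalComplex.exactAt_iff' _ 2 1 0 (by simp) (by simp)]
        have := hS.mono_f
        exact (ShortComplex.exact_iff_of_epi_of_isIso_of_mono
          (S₁ := ShortComplex.mk _ _ P.d_comp_augmentation)
          (S₂ := ShortComplex.mk (P.complex.d 1 0) (P.augmentation ≫ S.f) (by simp))
          ⟨𝟙 _, 𝟙 _, S.f, by simp, by simp⟩).1 P.exact_augmentation
      | n + 2 =>
        rw [quasiIsoAt_iff_exactAt' _ _ (ChainComplex.exactAt_succ_single_obj _ _),
          HomologicalComplex.exactAt_iff' _ (n + 3) (n + 2) (n + 1) (by simp) (by simp)]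
        exact P.exact_succ n⟩ }

end CategoryTheory.ProjectiveResolution

variable {A}

theorem extZero_succ_iff {X : ModuleCat.{u} A} (P : ProjectiveResolution X) (Y : ModuleCat.{u} A)
    (j : ℕ) :
    extZero k A (j + 1) X Y ↔ ∀ f : P.complex.X (j + 1) ⟶ Y, P.complex.d (j + 2) (j + 1) ≫ f = 0 →
      ∃ g : P.complex.X j ⟶ Y, P.complex.d (j + 1) j ≫ g = f := by
  rw [extZero, extGrp, ((forget _).mapIso (P.isoExt (j + 1) Y)).toEquiv.subsingleton_congr,
    ← ModuleCat.isZero_iff_subsingleton, ← HomologicalComplex.exactAt_iff_isZero_homology,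
    HomologicalComplex.exactAt_iff' _ j (j + 1) (j + 2) (by simp) (by simp),
    ShortComplex.moduleCat_exact_iff]
  rfl

theorem extZero_iff_isZero {i : ℕ} {X Y : ModuleCat.{u} A} :
    extZero k A i X Y ↔ IsZero (extGrp k A i X Y) :=
  ModuleCat.isZero_iff_subsingleton.symm

theorem extZero_of_projective (X Y : ModuleCat.{u} A) [Projective X] (j : ℕ) :
    extZero k A (j + 1) X Y :=
  (extZero_iff_isZero k).2 (isZero_Ext_succ_of_projective X Y j)

theorem extZero_of_injective (X Y : ModuleCat.{u} A) [Injective Y] (j : ℕ) :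
    extZero k A (j + 1) X Y := by
  let P := ProjectiveResolution.of X
  refine (extZero_succ_iff k P Y j).2 fun f hf => ?_
  exact ⟨(P.exact_succ j).descToInjective f hf, (P.exact_succ j).comp_descToInjective f hf⟩

theorem extZero_of_retract {i : ℕ} {W Y Z : ModuleCat.{u} A} (h : Retract Y Z)
    (hZ : extZero k A i W Z) : extZero k A i W Y := by
  let h' : Retract (extGrp k A i W Y) (extGrp k A i W Z) := h.map _
  exact (extZero_iff_isZero k).2 (((extZero_iff_isZero k).1 hZ).of_mono h'.i)

theorem extZero_biproduct {W : ModuleCat.{u} A} {ι : Type} [Finite ι] (Y : ι → ModuleCat.{u} A)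
    (j : ℕ) (h : ∀ l, extZero k A (j + 1) W (Y l)) : extZero k A (j + 1) W (⨁ Y) := by
  let P := ProjectiveResolution.of W
  refine (extZero_succ_iff k P _ j).2 fun f hf => ?_
  have hl l := (extZero_succ_iff k P _ j).1 (h l) (f ≫ biproduct.π Y l)
    (by rw [reassoc_of% hf, zero_comp])
  choose g hg using hl
  exact ⟨biproduct.lift g, biproduct.hom_ext _ _ fun l => by
    rw [Category.assoc, biproduct.lift_π, hg]⟩

theorem extZero_of_inAdd {S : Set (ModuleCat.{u} A)} {W Y : ModuleCat.{u} A} (hY : InAdd A S Y)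
    {j : ℕ} (hS : ∀ M ∈ S, extZero k A (j + 1) W M) : extZero k A (j + 1) W Y := by
  obtain ⟨Y', m, f, hf, ⟨e⟩⟩ := hY
  exact extZero_of_retract k ⟨biprod.inl ≫ e.hom, e.inv ≫ biprod.fst, by simp⟩
    (extZero_biproduct k f j fun l => hS _ (hf l))

theorem idLE_of_inAdd {S : Set (ModuleCat.{u} A)} {Y : ModuleCat.{u} A} (hY : InAdd A S Y)
    {d : ℕ} (hS : ∀ M ∈ S, idLE k A M d) : idLE k A Y d := by
  intro i hi W
  obtain ⟨j, rfl⟩ := Nat.exists_eq_add_of_lt hi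
  exact extZero_of_inAdd k hY fun M hM => hS M hM _ hi W

theorem inAdd_of_isSummand {X M : ModuleCat.{u} A} (h : IsSummand A X M) : InAdd A {M} X := by
  obtain ⟨Y, ⟨e⟩⟩ := h
  exact ⟨Y, 1, fun _ => M, fun _ => rfl, ⟨e.symm ≪≫ (biproductUniqueIso fun _ : Fin 1 => M).symm⟩⟩

section ShortExact

variable {S : ShortComplex (ModuleCat.{u} A)}

theorem extZero_succ_succ_iff (hS : S.ShortExact) [Projective S.X₂] (Y : ModuleCat.{u} A)
    (j : ℕ) : extZero k A (j + 2) S.X₃ Y ↔ extZero k A (j + 1) S.X₁ Y := by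
  let P := ProjectiveResolution.of S.X₁
  rw [extZero_succ_iff k (P.ofShortExact hS) Y (j + 1), extZero_succ_iff k P Y j]
  rfl

theorem exists_f_comp_eq_of_extZero_one (hS : S.ShortExact) [Projective S.X₂]
    {Y : ModuleCat.{u} A} (h : extZero k A 1 S.X₃ Y) (g : S.X₁ ⟶ Y) :
    ∃ g' : S.X₂ ⟶ Y, S.f ≫ g' = g := by
  let P := ProjectiveResolution.of S.X₁
  obtain ⟨g', hg'⟩ := (extZero_succ_iff k (P.ofShortExact hS) Y 0).1 h (P.augmentation ≫ g)
    (P.d_comp_augmentation_assoc g)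
  exact ⟨g', (cancel_epi P.augmentation).1 ((Category.assoc _ _ _).symm.trans hg')⟩

theorem projective_of_extZero_one (hS : S.ShortExact) [Projective S.X₂]
    (h : extZero k A 1 S.X₃ S.X₁) : Projective S.X₃ := by
  obtain ⟨r, hr⟩ := exists_f_comp_eq_of_extZero_one k hS h (𝟙 _)
  let s := ShortComplex.Splitting.ofExactOfRetraction S hS.exact r hr hS.epi_g
  exact Retract.projective ⟨s.s, S.g, s.s_g⟩

variable (W : ModuleCat.{u} A)

theorem extZero_X₃_of_shortExact (hS : S.ShortExact) (j : ℕ) (h₂ : extZero k A (j + 1) W S.X₂)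
    (h₁ : extZero k A (j + 2) W S.X₁) : extZero k A (j + 1) W S.X₃ := by
  have := hS.mono_f
  have := hS.epi_g
  let P := ProjectiveResolution.of W
  rw [extZero_succ_iff k P] at h₁ h₂ ⊢
  intro f hf
  let f' := Projective.factorThru f S.g
  have hc : (P.complex.d (j + 2) (j + 1) ≫ f') ≫ S.g = 0 := by simp [f', hf]
  obtain ⟨e, he⟩ := h₁ (hS.exact.lift _ hc) <| by
    rw [← cancel_mono S.f]; simp
  obtain ⟨g, hg⟩ := h₂ (f' - e ≫ S.f) <| by
    rw [Preadditive.comp_sub, reassoc_of% he]; simp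
  exact ⟨g ≫ S.g, by simp [reassoc_of% hg, f']⟩

theorem extZero_X₁_of_shortExact (hS : S.ShortExact) (j : ℕ) (h₂ : extZero k A (j + 2) W S.X₂)
    (h₃ : extZero k A (j + 1) W S.X₃) : extZero k A (j + 2) W S.X₁ := by
  have := hS.mono_f
  have := hS.epi_g
  let P := ProjectiveResolution.of W
  rw [extZero_succ_iff k P] at h₂ h₃ ⊢
  intro f hf
  obtain ⟨e, he⟩ := h₂ (f ≫ S.f) (by simp [reassoc_of% hf])
  obtain ⟨g, hg⟩ := h₃ (e ≫ S.g) (by simp [reassoc_of% he])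
  let g' := Projective.factorThru g S.g
  have hu : (e - P.complex.d (j + 1) j ≫ g') ≫ S.g = 0 := by simp [g', hg]
  refine ⟨hS.exact.lift _ hu, ?_⟩
  rw [← cancel_mono S.f]
  simp [he]

theorem extZero_one_X₁_of_shortExact (hS : S.ShortExact) (h₂ : extZero k A 1 W S.X₂)
    (hlift : ∀ g : W ⟶ S.X₃, ∃ g' : W ⟶ S.X₂, g' ≫ S.g = g) : extZero k A 1 W S.X₁ := by
  have := hS.mono_f
  let P := ProjectiveResolution.of W
  rw [extZero_succ_iff k P] at h₂ ⊢
  intro f hf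
  obtain ⟨e, he⟩ := h₂ (f ≫ S.f) (by simp [reassoc_of% hf])
  obtain ⟨v, hv⟩ := hlift (P.exact_augmentation.desc (e ≫ S.g) (by simp [reassoc_of% he]))
  have hu : (e - P.augmentation ≫ v) ≫ S.g = 0 := by
    simp [hv, P.exact_augmentation.g_desc]
  refine ⟨hS.exact.lift _ hu, ?_⟩
  rw [← cancel_mono S.f]
  simp [he]

end ShortExact

theorem baer_of_extZero_one {Y : ModuleCat.{u} A}
    (h : ∀ I : Ideal A, extZero k A 1 (ModuleCat.of A (A ⧸ I)) Y) : Module.Baer A Y := by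
  intro I g
  let S := ShortComplex.mk (ModuleCat.ofHom I.subtype) (ModuleCat.ofHom I.mkQ) (by ext; simp)
  have hS : S.ShortExact := ModuleCat.shortComplex_shortExact S (LinearMap.exact_subtype_mkQ I)
    (Submodule.injective_subtype I) (Submodule.mkQ_surjective I)
  obtain ⟨g', hg'⟩ := exists_f_comp_eq_of_extZero_one k hS (h I) (ModuleCat.ofHom g)
  exact ⟨g'.hom, fun x hx => congr(($hg').hom ⟨x, hx⟩)⟩

theorem idLE_of_forall_finite {e : ℕ} {Y : ModuleCat.{u} A}
    (h : ∀ X : ModuleCat.{u} A, Module.Finite A X → ∀ i, e < i → extZero k A i X Y) :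
    idLE k A Y e := by
  induction e generalizing Y with
  | zero =>
    have : Module.Injective A Y := Module.Baer.injective <| baer_of_extZero_one k fun I =>
      h _ (Module.Finite.of_surjective _ (Submodule.mkQ_surjective I)) 1 one_pos
    have : Injective Y := Module.injective_object_of_injective_module A Y
    intro i hi X
    obtain ⟨j, rfl⟩ := Nat.exists_eq_add_of_lt hi
    exact extZero_of_injective k X Y _
  | succ e ih =>
    let S := ShortComplex.mk (Injective.ι Y) (cokernel.π _) (cokernel.condition _)
    have hS : S.ShortExact := .mk' (S.exact_of_g_is_cokernel (cokernelIsCokernel _))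
      inferInstance inferInstance
    have hZ : idLE k A S.X₃ e := ih fun X _ i hi => by
      obtain ⟨j, rfl⟩ := Nat.exists_eq_add_of_lt hi
      exact extZero_X₃_of_shortExact k X hS _ (extZero_of_injective k X _ _) (h X ‹_› _ (by omega))
    intro i hi X
    obtain ⟨j, rfl⟩ : ∃ j, i = e + j + 2 := ⟨i - e - 2, by omega⟩
    exact extZero_X₁_of_shortExact k X hS (e + j) (extZero_of_injective k X _ _)
      (hZ _ (by omega) X)

theorem exists_shortExact_of_finite [IsNoetherianRing A] {X : ModuleCat.{u} A}
    (hX : Module.Finite A X) :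
    ∃ S : ShortComplex (ModuleCat.{u} A), S.ShortExact ∧ Projective S.X₂ ∧
      Module.Finite A S.X₁ ∧ S.X₃ = X := by
  obtain ⟨r, p, hp⟩ := Module.Finite.exists_fin' A X
  exact ⟨p.shortComplexKer, LinearMap.shortExact_shortComplexKer hp,
    ModuleCat.projective_of_free (Pi.basisFun A (Fin r)), inferInstance, rfl⟩

theorem pdLE_of_forall_finite [IsNoetherianRing A] {d : ℕ} {X : ModuleCat.{u} A}
    (hX : Module.Finite A X)
    (h : ∀ Y : ModuleCat.{u} A, Module.Finite A Y → ∀ i, d < i → extZero k A i X Y) :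
    pdLE k A X d := by
  induction d generalizing X with
  | zero =>
    obtain ⟨S, hS, _, hK, rfl⟩ := exists_shortExact_of_finite hX
    have := projective_of_extZero_one k hS (h _ hK 1 one_pos)
    intro i hi Y
    obtain ⟨j, rfl⟩ := Nat.exists_eq_add_of_lt hi
    exact extZero_of_projective k _ Y _
  | succ d ih =>
    obtain ⟨S, hS, _, hK, rfl⟩ := exists_shortExact_of_finite hX
    have hpdK : pdLE k A S.X₁ d := ih hK fun Y hY i hi => by
      obtain ⟨j, rfl⟩ := Nat.exists_eq_add_of_lt hi
      exact (extZero_succ_succ_iff k hS Y _).1 (h Y hY _ (by omega))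
    intro i hi Y
    obtain ⟨j, rfl⟩ : ∃ j, i = d + j + 2 := ⟨i - d - 2, by omega⟩
    exact (extZero_succ_succ_iff k hS Y (d + j)).2 (hpdK _ (by omega) Y)

theorem gldimLE_of_forall_finite [IsNoetherianRing A] {d : ℕ}
    (h : ∀ Y : ModuleCat.{u} A, Module.Finite A Y → idLE k A Y d) : gldimLE k A d :=
  fun i hi X Y => idLE_of_forall_finite k
    (fun X hX i hi => pdLE_of_forall_finite k hX (fun Y hY i hi => h Y hY i hi X) i hi Y) i hi X

theorem projective_of_pdLE [IsNoetherianRing A] {m : ℕ} {X : ModuleCat.{u} A}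
    (hX : Module.Finite A X) (hpd : pdLE k A X m)
    (h : ∀ i, 0 < i → i ≤ m → ∀ Q : ModuleCat.{u} A, Module.Finite A Q → Projective Q →
      extZero k A i X Q) : Projective X := by
  induction m generalizing X with
  | zero =>
    obtain ⟨S, hS, _, -, rfl⟩ := exists_shortExact_of_finite hX
    exact projective_of_extZero_one k hS (hpd 1 one_pos _)
  | succ m ih =>
    obtain ⟨S, hS, _, hK, rfl⟩ := exists_shortExact_of_finite hX
    have : Projective S.X₁ := ih hK
      (fun i hi Y => by
        obtain ⟨j, rfl⟩ := Nat.exists_eq_add_of_lt hi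
        exact (extZero_succ_succ_iff k hS Y _).1 (hpd _ (by omega) Y))
      (fun i hi him Q hQ _ => by
        obtain ⟨j, rfl⟩ := Nat.exists_eq_add_of_lt hi
        exact (extZero_succ_succ_iff k hS Q _).1 (h _ (by omega) (by omega) Q hQ ‹_›))
    exact projective_of_extZero_one k hS (h 1 one_pos (by omega) _ hK this)

theorem surjective_of_rightApprox {C : Set (ModuleCat.{u} A)} (hA : ModuleCat.of A A ∈ C)
    {C₀ Y : ModuleCat.{u} A} (g : C₀ ⟶ Y)
    (hg : ∀ C₁ ∈ C, ∀ φ : C₁ ⟶ Y, ∃ ψ : C₁ ⟶ C₀, ψ ≫ g = φ) : Function.Surjective g := by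
  intro y
  obtain ⟨ψ, hψ⟩ := hg _ hA (ModuleCat.ofHom (LinearMap.toSpanSingleton A Y y))
  exact ⟨ψ (1 : A), by simpa using congr(($hψ).hom (1 : A))⟩

theorem idLE_X₃_of_shortExact {S : ShortComplex (ModuleCat.{u} A)} (hS : S.ShortExact) {d : ℕ}
    (h₂ : idLE k A S.X₂ d) (h₁ : idLE k A S.X₁ (d + 1)) : idLE k A S.X₃ d := by
  intro i hi W
  obtain ⟨j, rfl⟩ := Nat.exists_eq_add_of_lt hi
  exact extZero_X₃_of_shortExact k W hS _ (h₂ _ hi W) (h₁ _ (by omega) W)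

namespace IsNCT

variable {n : ℕ} {C : Set (ModuleCat.{u} A)}

theorem mem_of_projective (hC : IsNCT k A n C) {Q : ModuleCat.{u} A} (hQ : Module.Finite A Q)
    [Projective Q] : Q ∈ C :=
  (hC.2.2.2.1 Q).2 ⟨hQ, fun i hi _ Y _ => by
    obtain ⟨j, rfl⟩ := Nat.exists_eq_add_of_lt hi
    exact extZero_of_projective k Q Y _⟩

theorem projective_of_mem_of_pdLE [IsNoetherianRing A] (hC : IsNCT k A n C) {X : ModuleCat.{u} A}
    (hX : X ∈ C) {m : ℕ} (hmn : m < n) (hpd : pdLE k A X m) : Projective X :=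
  projective_of_pdLE k (hC.1 X hX) hpd fun i hi him Q hQ _ =>
    ((hC.2.2.2.1 X).1 hX).2 i hi (by omega) Q (hC.mem_of_projective k hQ)

theorem idLE_of_finite [IsNoetherianRing A] (hC : IsNCT k A n C) {d : ℕ}
    (hid : ∀ Y ∈ C, idLE k A Y d) {Y : ModuleCat.{u} A} (hY : Module.Finite A Y) :
    idLE k A Y d := by
  have hA : ModuleCat.of A A ∈ C := hC.mem_of_projective k (Module.Finite.self A)
  obtain ⟨hfin, happrox, -, hperpL, hperpR⟩ := hC
  suffices key : ∀ m (Y : ModuleCat.{u} A), Module.Finite A Y →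
      (∀ W ∈ C, ∀ i, 0 < i → i + m < n → extZero k A i W Y) → idLE k A Y d from
    key n Y hY fun _ _ _ _ h => by omega
  intro m
  induction m with
  | zero =>
    exact fun Y hY hperp => hid Y ((hperpR Y).2 ⟨hY, fun i hi hin W hW => hperp W hW i hi hin⟩)
  | succ m ih =>
    intro Y hY hperp
    obtain ⟨C₀, hC₀, g, hg⟩ := happrox Y hY
    let S := g.hom.shortComplexKer
    have hS : S.ShortExact :=
      LinearMap.shortExact_shortComplexKer (surjective_of_rightApprox hA g hg)
    have := hfin C₀ hC₀
    have hperpK : ∀ W ∈ C, ∀ i, 0 < i → i + m < n → extZero k A i W S.X₁ := by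
      intro W hW i hi hin
      have hW₀ := ((hperpL W).1 hW).2
      match i, hi with
      | 1, _ =>
        exact extZero_one_X₁_of_shortExact k W hS (hW₀ 1 one_pos (by omega) C₀ hC₀) (hg W hW)
      | j + 2, _ =>
        exact extZero_X₁_of_shortExact k W hS j (hW₀ _ (by omega) (by omega) C₀ hC₀)
          (hperp W hW (j + 1) (by omega) (by omega))
    have hK := ih S.X₁ inferInstance hperpK
    exact idLE_X₃_of_shortExact k hS (hid C₀ hC₀) fun i hi => hK i (by omega)

end IsNCT

theorem gldim_eq_id_of_cluster_tilting
    [FiniteDimensional k A] (n : ℕ)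
    (M : ModuleCat.{u} A) (hM : IsNCTObject k A n M) :
    (∀ d : ℕ, gldimLE k A d ↔ idLE k A M d) ∧
    (∀ X : ModuleCat.{u} A, Indec A X → IsSummand A X M →
      (Projective X ∨ ∀ m : ℕ, m < n → ¬ pdLE k A X m)) := by
  have : IsNoetherianRing A := isNoetherian_of_tower k inferInstance
  obtain ⟨-, hC⟩ := hM
  refine ⟨fun d => ⟨fun h i hi Y => h i hi Y M, fun h => ?_⟩, fun X _ hX => ?_⟩
  · exact gldimLE_of_forall_finite k fun Y hY =>
      hC.idLE_of_finite k (fun Y hY => idLE_of_inAdd k hY fun _ hM' => hM' ▸ h) hY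
  · refine or_iff_not_imp_right.2 fun hpd => ?_
    push Not at hpd
    obtain ⟨m, hmn, hm⟩ := hpd
    exact hC.projective_of_mem_of_pdLE k (inAdd_of_isSummand hX) hmn hm
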